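/- For t = 0,1,2,3 let A_t ∈ ℝ^{m×n} and B_t ∈ ℝ^{m×d} be the components of reduced biquaternion matrices A and B, and let C = [A₀; A₁; A₂; A₃] ∈ ℝ^{4m×n} and D = [B₀; B₁; B₂; B₃] ∈ ℝ^{4m×d} be their vertical stackings. Then a real matrix X ∈ ℝ^{n×d} is an RBTLS solution — i.e., there exist real quadruples E_t ∈ ℝ^{m×n} and G_t ∈ ℝ^{m×d} (the components of reduced biquaternion perturbations Ê, Ĝ) attaining the minimum of (Σ_t ‖E_t‖_F² + Σ_t ‖G_t‖_F²)^{1/2} over all quadruples admitting a common real solution X′ of the four component equations (A_t + E_t) X′ = B_t + G_t, and such that these four equations hold with X — if and only if X is a real TLS solution, i.e., there exist Ẽ ∈ ℝ^{4m×n}, G̃ ∈ ℝ^{4m×d} attaining the minimum of ‖[Ẽ, G̃]‖_F subject to the existence of a real solution of (C + Ẽ) X′ = D + G̃, and such that (C + Ẽ) X = D + G̃. Moreover, the correspondence Ẽ = [E₀; E₁; E₂; E₃], G̃ = [G₀; G₁; G₂; G₃] preserves feasibility and the objective value: ‖[Ê, Ĝ]‖_F = ‖[Ẽ, G̃]‖_F.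 -/

import Mathlib

open Matrix

/-- The Frobenius norm of a real matrix. -/
noncomputable def frob {α β : Type*} [Fintype α] [Fintype β] (M : Matrix α β ℝ) : ℝ :=
  Real.sqrt (∑ i, ∑ j, M i j ^ 2)

/-- Vertical stacking `[M₀; M₁; M₂; M₃]` of the four real components of a reduced
biquaternion matrix. -/
def stack {m : ℕ} {β : Type*} (M : Fin 4 → Matrix (Fin m) β ℝ) :
    Matrix (Fin 4 × Fin m) β ℝ :=
  Matrix.of fun p j => M p.1 p.2 j

/-- The Frobenius norm `(Σ_t ‖E_t‖_F² + Σ_t ‖G_t‖_F²)^{1/2}` of the reduced biquaternion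
matrix `[Ê, Ĝ]` with components `E_t`, `G_t`. -/
noncomputable def objRB {m n d : ℕ}
    (E : Fin 4 → Matrix (Fin m) (Fin n) ℝ) (G : Fin 4 → Matrix (Fin m) (Fin d) ℝ) : ℝ :=
  Real.sqrt ((∑ t, ∑ i, ∑ j, E t i j ^ 2) + (∑ t, ∑ i, ∑ j, G t i j ^ 2))

/-- Componentwise feasibility for the RBTLS problem:
`(A_t + E_t) X = B_t + G_t` for `t = 0,1,2,3`. -/
def feasRB {m n d : ℕ}
    (A : Fin 4 → Matrix (Fin m) (Fin n) ℝ) (B : Fin 4 → Matrix (Fin m) (Fin d) ℝ)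
    (E : Fin 4 → Matrix (Fin m) (Fin n) ℝ) (G : Fin 4 → Matrix (Fin m) (Fin d) ℝ)
    (X : Matrix (Fin n) (Fin d) ℝ) : Prop :=
  ∀ t, (A t + E t) * X = B t + G t

/-- `X` is an RBTLS solution: some feasible reduced biquaternion perturbation `(E, G)`
attains the minimum of the objective over all feasible data. -/
def isRBTLSSol {m n d : ℕ}
    (A : Fin 4 → Matrix (Fin m) (Fin n) ℝ) (B : Fin 4 → Matrix (Fin m) (Fin d) ℝ)
    (X : Matrix (Fin n) (Fin d) ℝ) : Prop :=
  ∃ E G, feasRB A B E G X ∧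
    ∀ E' G' (X' : Matrix (Fin n) (Fin d) ℝ),
      feasRB A B E' G' X' → objRB E G ≤ objRB E' G'

/-- Feasibility for the real TLS problem: `(C + Ẽ) X = D + G̃`. -/
def feasTLS {n d : ℕ} {α : Type*} [Fintype α]
    (C : Matrix α (Fin n) ℝ) (D : Matrix α (Fin d) ℝ)
    (Et : Matrix α (Fin n) ℝ) (Gt : Matrix α (Fin d) ℝ)
    (X : Matrix (Fin n) (Fin d) ℝ) : Prop :=
  (C + Et) * X = D + Gt

/-- `X` is a real TLS solution: some feasible real perturbation `(Ẽ, G̃)` attains the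
minimum of `‖[Ẽ, G̃]‖_F` over all feasible data. -/
def isTLSSol {n d : ℕ} {α : Type*} [Fintype α]
    (C : Matrix α (Fin n) ℝ) (D : Matrix α (Fin d) ℝ)
    (X : Matrix (Fin n) (Fin d) ℝ) : Prop :=
  ∃ Et Gt, feasTLS C D Et Gt X ∧
    ∀ Et' Gt' (X' : Matrix (Fin n) (Fin d) ℝ),
      feasTLS C D Et' Gt' X' → frob (fromCols Et Gt) ≤ frob (fromCols Et' Gt')

/-! Stacking the four real components is a bijection `(Fin 4 → ℝ^{m×k}) ≃ ℝ^{4m×k}` that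
commutes with right multiplication by a real `X` and preserves the sum of squared entries.
It therefore maps RBTLS-feasible perturbations bijectively onto TLS-feasible ones with the
same objective value, so the minimizers of the two problems correspond. -/

def stackEquiv {m : ℕ} {β : Type*} :
    (Fin 4 → Matrix (Fin m) β ℝ) ≃ Matrix (Fin 4 × Fin m) β ℝ where
  toFun := stack
  invFun M t := Matrix.of fun i j => M (t, i) j
  left_inv _ := rfl
  right_inv _ := rfl

lemma stack_injective {m : ℕ} {β : Type*} :
    Function.Injective (stack : (Fin 4 → Matrix (Fin m) β ℝ) → _) :=
  stackEquiv.injective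

lemma stack_add {m : ℕ} {β : Type*} (M N : Fin 4 → Matrix (Fin m) β ℝ) :
    stack (M + N) = stack M + stack N :=
  rfl

lemma stack_mul {m n : ℕ} {β : Type*} [Fintype β] (M : Fin 4 → Matrix (Fin m) β ℝ)
    (X : Matrix β (Fin n) ℝ) :
    stack (fun t => M t * X) = stack M * X :=
  rfl

lemma objRB_eq_frob_fromCols_stack {m n d : ℕ} (E : Fin 4 → Matrix (Fin m) (Fin n) ℝ)
    (G : Fin 4 → Matrix (Fin m) (Fin d) ℝ) :
    objRB E G = frob (fromCols (stack E) (stack G)) := by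
  simp only [objRB, frob, Fintype.sum_sum_type, fromCols_apply_inl, fromCols_apply_inr,
    Fintype.sum_prod_type, Finset.sum_add_distrib, stack, of_apply]

lemma feasRB_iff_feasTLS_stack {m n d : ℕ}
    (A : Fin 4 → Matrix (Fin m) (Fin n) ℝ) (B : Fin 4 → Matrix (Fin m) (Fin d) ℝ)
    (E : Fin 4 → Matrix (Fin m) (Fin n) ℝ) (G : Fin 4 → Matrix (Fin m) (Fin d) ℝ)
    (X : Matrix (Fin n) (Fin d) ℝ) :
    feasRB A B E G X ↔ feasTLS (stack A) (stack B) (stack E) (stack G) X := by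
  rw [feasTLS, ← stack_add, ← stack_add, ← stack_mul, stack_injective.eq_iff, funext_iff]
  rfl

lemma exists_minimizer_congr {P Q S : Type*} {γ : Type*} [Preorder γ] (e : P ≃ Q)
    {F : P → S → Prop} {F' : Q → S → Prop} {φ : P → γ} {ψ : Q → γ}
    (hF : ∀ p x, F' (e p) x ↔ F p x) (hφ : ∀ p, ψ (e p) = φ p) (x : S) :
    (∃ p, F p x ∧ ∀ p' x', F p' x' → φ p ≤ φ p') ↔
      ∃ q, F' q x ∧ ∀ q' x', F' q' x' → ψ q ≤ ψ q' := by
  simp only [← e.exists_congr_right, ← e.forall_congr_right, hF, hφ]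

/-- a real matrix `X` is an RBTLS solution if and only if it is a real TLS
solution for the stacked data `C = [A₀; A₁; A₂; A₃]`, `D = [B₀; B₁; B₂; B₃]`; moreover
the correspondence `Ẽ = [E₀; E₁; E₂; E₃]`, `G̃ = [G₀; G₁; G₂; G₃]` preserves the
objective value (`‖[Ê, Ĝ]‖_F = ‖[Ẽ, G̃]‖_F`) and feasibility. -/
theorem rbtls_iff_tls {m n d : ℕ}
    (A : Fin 4 → Matrix (Fin m) (Fin n) ℝ) (B : Fin 4 → Matrix (Fin m) (Fin d) ℝ)
    (X : Matrix (Fin n) (Fin d) ℝ) :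
    (isRBTLSSol A B X ↔ isTLSSol (stack A) (stack B) X) ∧
    (∀ (E : Fin 4 → Matrix (Fin m) (Fin n) ℝ) (G : Fin 4 → Matrix (Fin m) (Fin d) ℝ),
      objRB E G = frob (fromCols (stack E) (stack G))) ∧
    (∀ (E : Fin 4 → Matrix (Fin m) (Fin n) ℝ) (G : Fin 4 → Matrix (Fin m) (Fin d) ℝ)
      (X' : Matrix (Fin n) (Fin d) ℝ),
      feasRB A B E G X' ↔ feasTLS (stack A) (stack B) (stack E) (stack G) X') := by
  refine ⟨?_, objRB_eq_frob_fromCols_stack, feasRB_iff_feasTLS_stack A B⟩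
  have transport := exists_minimizer_congr (stackEquiv.prodCongr stackEquiv)
    (F := fun p X => feasRB A B p.1 p.2 X)
    (F' := fun q X => feasTLS (stack A) (stack B) q.1 q.2 X)
    (φ := fun p => objRB p.1 p.2) (ψ := fun q => frob (fromCols q.1 q.2))
    (fun p X => (feasRB_iff_feasTLS_stack A B p.1 p.2 X).symm)
    (fun p => (objRB_eq_frob_fromCols_stack p.1 p.2).symm) X
  simpa only [isRBTLSSol, isTLSSol, Prod.exists, Prod.forall] using transport
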